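/- Let G be a countable abelian group, H a Hilbert space, (U^g) a unitary representation, and p an idempotent ultrafilter on G (p + p = p, p nonprincipal). Then U^p is an orthogonal projection: (U^p)² = U^p and (U^p)* = U^p. -/

import Mathlib

/-!
Writing `⟪f, U (g + h) f'⟫ = ⟪(U g)† f, U h f'⟫` and taking limits first in `h`, then in `g`,
shows that the weak-operator limit along `p + q` is `U^p U^q`, so idempotency of `p` makes `U^p` idempotent. As a weak limit of unitaries `U^p` is a contraction,
and an idempotent contraction is self-adjoint: for `u` in its range and `v` in its kernel,
`‖u‖ = ‖U^p (u - w)‖ ≤ ‖u - w‖` for every `w` in the kernel, so `0` is the point of the kernel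
closest to `u`, which forces `u ⟂ v`.
-/

/-- `V` is the weak-operator-topology limit of the operators `U g` along the
ultrafilter `p`. -/
def IsWOTLimit {G : Type*} {H : Type*} [NormedAddCommGroup H] [InnerProductSpace ℂ H]
    (U : G → (H →L[ℂ] H)) (p : Ultrafilter G) (V : H →L[ℂ] H) : Prop :=
  ∀ f f' : H,
    Filter.Tendsto (fun g => (inner ℂ f (U g f') : ℂ)) (p : Filter G)
      (nhds (inner ℂ f (V f')))

/-- The sum `p + q` of two ultrafilters on an additive group. -/
def ultraAdd {G : Type*} [AddCommGroup G] (p q : Ultrafilter G) : Ultrafilter G :=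
  p.bind fun g => q.map fun h => g + h

open Filter Topology

namespace ContinuousLinearMap

variable {𝕜 E : Type*} [RCLike 𝕜] [NormedAddCommGroup E] [InnerProductSpace 𝕜 E]

theorem inner_eq_zero_of_norm_le_one {T : E →L[𝕜] E} (hT1 : ‖T‖ ≤ 1) {u v : E} (hu : T u = u)
    (hv : T v = 0) : inner 𝕜 u v = 0 := by
  have hmin : ‖u - 0‖ = ⨅ w : LinearMap.ker (T : E →ₗ[𝕜] E), ‖u - w‖ := by
    refine le_antisymm (le_ciInf fun w => ?_) ((ciInf_le ⟨0, ?_⟩ 0).trans_eq ?_)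
    · calc ‖u - 0‖ = ‖T (u - w)‖ := by rw [map_sub, hu, show T w = 0 from w.2, sub_zero]
        _ ≤ ‖u - w‖ := (T.le_of_opNorm_le hT1 _).trans_eq (one_mul _)
    · rintro _ ⟨w, rfl⟩; exact norm_nonneg _
    · simp
  simpa using (Submodule.norm_eq_iInf_iff_inner_eq_zero _ (zero_mem _)).mp hmin v hv

variable [CompleteSpace E]

theorem isSelfAdjoint_of_isIdempotentElem_of_norm_le_one {T : E →L[𝕜] E}
    (hT : IsIdempotentElem T) (hT1 : ‖T‖ ≤ 1) : IsSelfAdjoint T := by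
  rw [isSelfAdjoint_iff_isSymmetric,
    LinearMap.IsIdempotentElem.isSymmetric_iff_isOrtho_range_ker (IsIdempotentElem.toLinearMap hT),
    Submodule.isOrtho_iff_inner_eq]
  rintro _ ⟨x, rfl⟩ v hv
  exact inner_eq_zero_of_norm_le_one hT1 (DFunLike.congr_fun hT.eq x) hv

end ContinuousLinearMap

section

variable {G X : Type*} [AddCommGroup G] [TopologicalSpace X]

theorem tendsto_ultraAdd {p q : Ultrafilter G} {F a : G → X} {b : X}
    (hF : ∀ g, Tendsto (fun h => F (g + h)) q (𝓝 (a g))) (ha : Tendsto a p (𝓝 b)) :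
    Tendsto F (ultraAdd p q) (𝓝 b) := by
  refine tendsto_nhds.mpr fun s hs hb => ?_
  change F ⁻¹' s ∈ (p : Filter G).bind fun g => map (g + ·) q
  rw [mem_bind']
  filter_upwards [ha (hs.mem_nhds hb)] with g hg using hF g (hs.mem_nhds hg)

end

namespace IsWOTLimit

variable {G H : Type*} [NormedAddCommGroup H] [InnerProductSpace ℂ H]
  {U : G → H →L[ℂ] H} {p : Ultrafilter G} {V W : H →L[ℂ] H}

theorem unique (hV : IsWOTLimit U p V) (hW : IsWOTLimit U p W) : V = W :=
  ContinuousLinearMap.ext fun x => ext_inner_left ℂ fun y => tendsto_nhds_unique (hV y x) (hW y x)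

theorem opNorm_le {C : ℝ} (hU : ∀ g, ‖U g‖ ≤ C) (hV : IsWOTLimit U p V) : ‖V‖ ≤ C := by
  obtain ⟨g₀, -⟩ := p.nonempty_of_mem univ_mem
  have hC : 0 ≤ C := (norm_nonneg _).trans (hU g₀)
  refine V.opNorm_le_bound hC fun x => ?_
  have hbound : ∀ g, ‖inner ℂ (V x) (U g x)‖ ≤ ‖V x‖ * (C * ‖x‖) := fun g =>
    (norm_inner_le_norm _ _).trans
      (mul_le_mul_of_nonneg_left ((U g).le_of_opNorm_le (hU g) x) (norm_nonneg _))
  have hsq : ‖V x‖ * ‖V x‖ ≤ ‖V x‖ * (C * ‖x‖) := by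
    rw [← inner_self_eq_norm_mul_norm (𝕜 := ℂ), inner_self_re_eq_norm]
    exact le_of_tendsto (hV (V x) x).norm (Eventually.of_forall hbound)
  rcases (norm_nonneg (V x)).eq_or_lt with h0 | hpos
  · rw [← h0]; positivity
  · exact le_of_mul_le_mul_left hsq hpos

variable [AddCommGroup G] [CompleteSpace H]

theorem ultraAdd_comp (hrep : ∀ g h, U (g + h) = U g ∘L U h) {q : Ultrafilter G}
    (hV : IsWOTLimit U p V) (hW : IsWOTLimit U q W) :
    IsWOTLimit U (ultraAdd p q) (V ∘L W) := fun f f' =>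
  tendsto_ultraAdd (a := fun g => inner ℂ f (U g (W f')))
    (fun g => by
      simpa only [ContinuousLinearMap.adjoint_inner_left, ← ContinuousLinearMap.comp_apply,
        ← hrep] using hW (ContinuousLinearMap.adjoint (U g) f) f')
    (hV f (W f'))

end IsWOTLimit

theorem stmt_9_general {G : Type*} [AddCommGroup G]
    {H : Type*} [NormedAddCommGroup H] [InnerProductSpace ℂ H] [CompleteSpace H]
    (U : G → (H →L[ℂ] H))
    (hrep : ∀ g h : G, U (g + h) = U g ∘L U h)
    (hunit : ∀ g : G,
      ContinuousLinearMap.adjoint (U g) ∘L U g = 1 ∧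
        U g ∘L ContinuousLinearMap.adjoint (U g) = 1)
    (p : Ultrafilter G) (hidem : ultraAdd p p = p)
    (Up : H →L[ℂ] H) (hUp : IsWOTLimit U p Up) :
    Up ∘L Up = Up ∧ ContinuousLinearMap.adjoint Up = Up := by
  have hUnorm : ∀ g, ‖U g‖ ≤ 1 := fun g =>
    (U g).opNorm_le_bound zero_le_one fun x => by
      rw [(U g).norm_map_iff_adjoint_comp_self.mpr (hunit g).1 x, one_mul]
  have hsq : Up ∘L Up = Up := by
    have hcomp := hUp.ultraAdd_comp hrep hUp
    rw [hidem] at hcomp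
    exact hcomp.unique hUp
  exact ⟨hsq, ContinuousLinearMap.isSelfAdjoint_of_isIdempotentElem_of_norm_le_one hsq
    (hUp.opNorm_le hUnorm)⟩

/-- For a unitary representation of a countable abelian group and a nonprincipal
idempotent ultrafilter `p` (`p + p = p`), the weak-operator limit `U^p` is an
orthogonal projection: `(U^p)² = U^p` and `(U^p)* = U^p`. -/
theorem stmt_9 {G : Type*} [AddCommGroup G] [Countable G]
    {H : Type*} [NormedAddCommGroup H] [InnerProductSpace ℂ H] [CompleteSpace H]
    (U : G → (H →L[ℂ] H))
    (hrep : ∀ g h : G, U (g + h) = U g ∘L U h) (hzero : U 0 = 1)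
    (hunit : ∀ g : G,
      ContinuousLinearMap.adjoint (U g) ∘L U g = 1 ∧
        U g ∘L ContinuousLinearMap.adjoint (U g) = 1)
    (p : Ultrafilter G) (hidem : ultraAdd p p = p)
    (hnp : ∀ g : G, p ≠ (pure g : Ultrafilter G))
    (Up : H →L[ℂ] H) (hUp : IsWOTLimit U p Up) :
    Up ∘L Up = Up ∧ ContinuousLinearMap.adjoint Up = Up :=
  stmt_9_general U hrep hunit p hidem Up hUp
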